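/- arXiv:quant-ph/0302056 — 3 statements merged into one kernel-verified Lean document; each statement's English description precedes it below -/
import Mathlib

section
/- Let H be a selfadjoint operator on a complex Hilbert space that is bounded from below. Then for every z in the closed lower half-plane {z : Im z ≤ 0}, the function λ ↦ e^{-iλz} is bounded on σ(H), the operator U(z) = e^{-iHz} satisfies U(z₁)U(z₂) = U(z₁ + z₂) for all such z₁, z₂, and ‖U(z)‖ ≤ e^{b·Im z} where b is a lower bound of σ(H); in particular ‖U(z)‖ ≤ 1 if b ≥ 0. -/
open Complex

lemma norm_exp_bound (b : ℝ) (z lam : ℂ) (hb : b ≤ lam.re) (him : lam.im = 0)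
    (hz : z.im ≤ 0) : ‖Complex.exp (-I * lam * z)‖ ≤ Real.exp (b * z.im) := by
  rw [Complex.norm_exp]
  apply Real.exp_le_exp.2
  have : (-I * lam * z).re = lam.im * z.re + lam.re * z.im := by
    simp [Complex.mul_re, Complex.mul_im]; ring
  rw [this, him]
  simpa using mul_le_mul_of_nonpos_right hb hz

/-- For `H` selfadjoint with spectrum bounded below by `b`, for every `z`
with `Im z ≤ 0` the function `λ ↦ e^{-iλz}` is bounded on `σ(H)`, the operators
`U(z) = e^{-iHz}` satisfy the semigroup law on the closed lower half-plane, and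
`‖U(z)‖ ≤ e^{b · Im z}`; in particular `‖U(z)‖ ≤ 1` if `b ≥ 0`. -/
theorem selfadjoint_lower_halfplane_semigroup
    {ℋ : Type*} [NormedAddCommGroup ℋ] [InnerProductSpace ℂ ℋ] [CompleteSpace ℋ]
    (H : ℋ →L[ℂ] ℋ) (hH : IsSelfAdjoint H) (b : ℝ)
    (hspec : ∀ lam ∈ spectrum ℂ H, lam.im = 0 ∧ b ≤ lam.re)
    (U : ℂ → (ℋ →L[ℂ] ℋ))
    (hU : ∀ z : ℂ, z.im ≤ 0 → U z = cfc (fun lam : ℂ => Complex.exp (-I * lam * z)) H) :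
    (∀ z : ℂ, z.im ≤ 0 → ∃ C : ℝ, ∀ lam ∈ spectrum ℂ H, ‖Complex.exp (-I * lam * z)‖ ≤ C) ∧
    (∀ z₁ z₂ : ℂ, z₁.im ≤ 0 → z₂.im ≤ 0 → U z₁ * U z₂ = U (z₁ + z₂)) ∧
    (∀ z : ℂ, z.im ≤ 0 → ‖U z‖ ≤ Real.exp (b * z.im)) ∧
    (0 ≤ b → ∀ z : ℂ, z.im ≤ 0 → ‖U z‖ ≤ 1) := by
  have hnormal : IsStarNormal H := hH.isStarNormal
  have hbound : ∀ z : ℂ, z.im ≤ 0 → ∀ lam ∈ spectrum ℂ H,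
      ‖Complex.exp (-I * lam * z)‖ ≤ Real.exp (b * z.im) := by
    intro z hz lam hlam
    exact norm_exp_bound b z lam (hspec lam hlam).2 (hspec lam hlam).1 hz
  have hnorm : ∀ z : ℂ, z.im ≤ 0 → ‖U z‖ ≤ Real.exp (b * z.im) := by
    intro z hz
    rw [hU z hz]
    exact norm_cfc_le (Real.exp_nonneg _) (hbound z hz)
  refine ⟨fun z hz => ⟨Real.exp (b * z.im), hbound z hz⟩, ?_, hnorm, ?_⟩
  · intro z₁ z₂ h₁ h₂
    rw [hU z₁ h₁, hU z₂ h₂, hU (z₁ + z₂) (by simpa using add_nonpos h₁ h₂)]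
    rw [← cfc_mul (fun lam : ℂ => Complex.exp (-I * lam * z₁))
      (fun lam : ℂ => Complex.exp (-I * lam * z₂)) H (by fun_prop) (by fun_prop)]
    apply cfc_congr
    intro lam _
    simp only [← Complex.exp_add]
    ring_nf
  · intro hb z hz
    calc ‖U z‖ ≤ Real.exp (b * z.im) := hnorm z hz
    _ ≤ 1 := Real.exp_le_one_iff.2 (mul_nonpos_of_nonneg_of_nonpos hb hz)
end

section
/- Fix Γ > 0 and let a = (t, x) ∈ ℝ⁴ with a ∉ T₊ (i.e., t < 0 or t < |x|). Then inf_{u ∈ ℝ³} (u₀ t - u·x) = -∞ where u₀ = (1+|u|²)^{1/2}; hence there exists f ∈ L²(ℝ³) such that the function u ↦ e^{-i(M-iΓ/2)(u₀ t - u·x)} f(u) is not in L²(ℝ³). -/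
set_option maxHeartbeats 1000000


open Complex MeasureTheory Metric

/-- `√(1+a²)` is 1-Lipschitz. -/
lemma aux_sqrt_lip (a b : ℝ) :
    Real.sqrt (1 + a ^ 2) ≤ Real.sqrt (1 + b ^ 2) + |a - b| := by
  have hs0 : 0 ≤ Real.sqrt (1 + b ^ 2) := Real.sqrt_nonneg _
  have hs : Real.sqrt (1 + b ^ 2) ^ 2 = 1 + b ^ 2 := Real.sq_sqrt (by positivity)
  have hsb : |b| ≤ Real.sqrt (1 + b ^ 2) := by
    have h := Real.sqrt_le_sqrt (show b ^ 2 ≤ 1 + b ^ 2 by linarith)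
    rwa [Real.sqrt_sq_eq_abs] at h
  have key : 1 + a ^ 2 ≤ (Real.sqrt (1 + b ^ 2) + |a - b|) ^ 2 := by
    nlinarith [abs_nonneg (a - b), _root_.sq_abs (a - b), le_abs_self (b * (a - b)),
      abs_mul b (a - b), mul_le_mul_of_nonneg_right hsb (abs_nonneg (a - b))]
  have h2 := Real.sqrt_le_sqrt key
  rwa [Real.sqrt_sq (by positivity)] at h2

/-- `exp(-c‖u‖)` is in `L²(ℝ³)` for `c > 0`. -/
lemma aux_exp_memL2 (c : ℝ) (hc : 0 < c) :
    MemLp (fun u : EuclideanSpace ℝ (Fin 3) => Real.exp (-(c * ‖u‖))) 2 volume := by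
  have hcont : Continuous fun u : EuclideanSpace ℝ (Fin 3) => Real.exp (-(c * ‖u‖)) :=
    Real.continuous_exp.comp ((continuous_const.mul continuous_norm).neg)
  rw [memLp_two_iff_integrable_sq hcont.aestronglyMeasurable]
  set m : ℝ := min 1 (c / 2) with hm
  have hm0 : 0 < m := lt_min one_pos (by positivity)
  have h4 : ((Module.finrank ℝ (EuclideanSpace ℝ (Fin 3)) : ℝ)) < 4 := by
    simp [finrank_euclideanSpace_fin]; norm_num
  have hint : Integrable
      (fun u : EuclideanSpace ℝ (Fin 3) => (m ^ 4)⁻¹ * (1 + ‖u‖) ^ (-(4 : ℝ))) volume :=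
    (integrable_one_add_norm h4).const_mul _
  refine hint.mono' ((hcont.pow 2).aestronglyMeasurable) (Filter.Eventually.of_forall fun u => ?_)
  set r : ℝ := ‖u‖ with hr
  have hr0 : 0 ≤ r := norm_nonneg u
  have hrpow : (1 + r) ^ (-(4 : ℝ)) = ((1 + r) ^ (4 : ℕ))⁻¹ := by
    rw [show (-(4 : ℝ)) = -((4 : ℕ) : ℝ) by norm_num, Real.rpow_neg (by positivity),
      Real.rpow_natCast]
  have h1 : m * (1 + r) ≤ c * r / 2 + 1 := by
    have h1a : m ≤ 1 := min_le_left _ _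
    have h1b : m ≤ c / 2 := min_le_right _ _
    nlinarith
  have h2 : m * (1 + r) ≤ Real.exp (c * r / 2) := h1.trans (Real.add_one_le_exp _)
  have h3 : m ^ 4 * (1 + r) ^ 4 ≤ Real.exp (c * r / 2) ^ 4 := by
    calc m ^ 4 * (1 + r) ^ 4 = (m * (1 + r)) ^ 4 := by ring
      _ ≤ Real.exp (c * r / 2) ^ 4 := pow_le_pow_left₀ (by positivity) h2 4
  have h4' : m ^ 4 * (1 + r) ^ 4 ≤ Real.exp (c * r + c * r) := by
    have hee : Real.exp (c * r / 2) ^ 4 = Real.exp (c * r + c * r) := by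
      rw [← Real.exp_nat_mul]; ring_nf
    linarith [h3, hee.le, hee.ge]
  have hexp : Real.exp (-(c * r)) ^ 2 = (Real.exp (c * r + c * r))⁻¹ := by
    rw [← Real.exp_neg]; rw [sq, ← Real.exp_add]; ring_nf
  have hb : Real.exp (-(c * r)) ^ 2 ≤ (m ^ 4)⁻¹ * (1 + r) ^ (-(4 : ℝ)) := by
    rw [hexp, hrpow, ← mul_inv]
    exact inv_anti₀ (by positivity) h4'
  calc ‖Real.exp (-(c * r)) ^ 2‖ = Real.exp (-(c * r)) ^ 2 := by
        rw [Real.norm_eq_abs]; exact _root_.abs_of_nonneg (by positivity)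
    _ ≤ (m ^ 4)⁻¹ * (1 + r) ^ (-(4 : ℝ)) := hb

/-- For `a = (t,x) ∉ T₊` (i.e. `t < 0` or `t < |x|`), the infimum of
`u₀ t - u·x` over `u ∈ ℝ³` is `-∞`; hence there is an `f ∈ L²(ℝ³)` such that
`u ↦ e^{-i(M-iΓ/2)(u₀ t - u·x)} f(u)` is not in `L²(ℝ³)`, i.e. `U(a)` is unbounded. -/
theorem multiplier_unbounded_outside_cone (M Γ : ℝ) (hM : 0 < M) (hΓ : 0 < Γ)
    (t : ℝ) (x : EuclideanSpace ℝ (Fin 3)) (htx : t < 0 ∨ t < ‖x‖) :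
    (∀ c : ℝ, ∃ u : EuclideanSpace ℝ (Fin 3),
        Real.sqrt (1 + ‖u‖ ^ 2) * t - (inner ℝ u x : ℝ) < c) ∧
    ∃ f : EuclideanSpace ℝ (Fin 3) → ℂ, MemLp f 2 volume ∧
      ¬ MemLp (fun u => Complex.exp (-I * (M - I * Γ / 2) *
          ((Real.sqrt (1 + ‖u‖ ^ 2) * t - (inner ℝ u x : ℝ) : ℝ) : ℂ)) * f u) 2 volume := by
  classical
  -- the direction `v` along which the phase goes to `-∞`
  obtain ⟨v, hv1, δ, hδ, K, hK0, hkey⟩ :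
      ∃ v : EuclideanSpace ℝ (Fin 3), ‖v‖ = 1 ∧ ∃ δ > 0, ∃ K ≥ 0,
        ∀ r : ℝ, 0 ≤ r →
          Real.sqrt (1 + r ^ 2) * t - r * (inner ℝ v x : ℝ) ≤ K - δ * r := by
    rcases le_or_gt 0 t with ht | ht
    · have hx : t < ‖x‖ := htx.resolve_left (not_lt.mpr ht)
      have hx0 : x ≠ 0 := by
        intro h; rw [h, norm_zero] at hx; linarith
      have hxn : (0:ℝ) < ‖x‖ := norm_pos_iff.mpr hx0
      refine ⟨‖x‖⁻¹ • x, ?_, ‖x‖ - t, by linarith, t, ht, ?_⟩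
      · rw [norm_smul, Real.norm_eq_abs]
        rw [_root_.abs_of_nonneg (by positivity), inv_mul_cancel₀ hxn.ne']
      · intro r hr
        have hinner : (inner ℝ (‖x‖⁻¹ • x) x : ℝ) = ‖x‖ := by
          rw [real_inner_smul_left, real_inner_self_eq_norm_sq]
          field_simp
        rw [hinner]
        have h1 : Real.sqrt (1 + r ^ 2) ≤ 1 + r := by
          have h := Real.sqrt_le_sqrt (show 1 + r ^ 2 ≤ (1 + r) ^ 2 by nlinarith)
          rwa [Real.sqrt_sq (by linarith)] at h
        nlinarith [mul_le_mul_of_nonneg_right h1 ht]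
    · -- t < 0
      have hladder : ∀ v : EuclideanSpace ℝ (Fin 3), ‖v‖ = 1 → 0 ≤ (inner ℝ v x : ℝ) →
          ∀ r : ℝ, 0 ≤ r →
            Real.sqrt (1 + r ^ 2) * t - r * (inner ℝ v x : ℝ) ≤ 0 - (-t) * r := by
        intro v hv1 hvx r hr
        have h2 : r ≤ Real.sqrt (1 + r ^ 2) := by
          have h := Real.sqrt_le_sqrt (show r ^ 2 ≤ 1 + r ^ 2 by linarith)
          rwa [Real.sqrt_sq hr] at h
        nlinarith [mul_le_mul_of_nonneg_left h2 (le_of_lt (neg_pos.mpr ht)),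
          mul_nonneg hr hvx]
      by_cases hx0 : x = 0
      · refine ⟨EuclideanSpace.single (0 : Fin 3) (1 : ℝ), by
          simp [EuclideanSpace.norm_single], -t, by linarith, 0, le_refl 0, ?_⟩
        exact hladder _ (by simp [EuclideanSpace.norm_single]) (by simp [hx0])
      · have hxn : (0:ℝ) < ‖x‖ := norm_pos_iff.mpr hx0
        refine ⟨‖x‖⁻¹ • x, ?_, -t, by linarith, 0, le_refl 0, ?_⟩
        · rw [norm_smul, Real.norm_eq_abs]
          rw [_root_.abs_of_nonneg (by positivity), inv_mul_cancel₀ hxn.ne']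
        · refine hladder _ ?_ ?_
          · rw [norm_smul, Real.norm_eq_abs]
            rw [_root_.abs_of_nonneg (by positivity), inv_mul_cancel₀ hxn.ne']
          · rw [real_inner_smul_left, real_inner_self_eq_norm_sq]; positivity
  -- the phase function value along the ray
  have hray : ∀ r : ℝ, 0 ≤ r →
      Real.sqrt (1 + ‖(r • v : EuclideanSpace ℝ (Fin 3))‖ ^ 2) * t -
        (inner ℝ (r • v : EuclideanSpace ℝ (Fin 3)) x : ℝ) ≤ K - δ * r := by
    intro r hr
    have hn : ‖(r • v : EuclideanSpace ℝ (Fin 3))‖ = r := by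
      rw [norm_smul, hv1, mul_one, Real.norm_eq_abs, _root_.abs_of_nonneg hr]
    rw [hn, real_inner_smul_left]
    exact hkey r hr
  -- PART 1
  have part1 : ∀ c : ℝ, ∃ u : EuclideanSpace ℝ (Fin 3),
      Real.sqrt (1 + ‖u‖ ^ 2) * t - (inner ℝ u x : ℝ) < c := by
    intro c
    set r : ℝ := max 0 ((K - c) / δ + 1) with hrdef
    have hr0 : 0 ≤ r := le_max_left _ _
    refine ⟨r • v, lt_of_le_of_lt (hray r hr0) ?_⟩
    have hr1 : (K - c) / δ + 1 ≤ r := le_max_right _ _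
    have hcc : δ * ((K - c) / δ + 1) = K - c + δ := by field_simp
    nlinarith [mul_le_mul_of_nonneg_left hr1 hδ.le]
  refine ⟨part1, ?_⟩
  -- PART 2
  set L : ℝ := |t| + ‖x‖ with hL
  have hL0 : 0 ≤ L := by positivity
  set ε : ℝ := δ / 2 with hε
  have hε0 : 0 < ε := by rw [hε]; positivity
  set R : ℝ := 2 * (K + L + δ) / δ with hR
  have hR0 : 0 < R := by rw [hR]; positivity
  have hδR : δ * R = 2 * (K + L + δ) := by rw [hR]; field_simp
  -- Lipschitz estimate for the phase
  have hlip : ∀ u w : EuclideanSpace ℝ (Fin 3),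
      Real.sqrt (1 + ‖u‖ ^ 2) * t - (inner ℝ u x : ℝ) ≤
        (Real.sqrt (1 + ‖w‖ ^ 2) * t - (inner ℝ w x : ℝ)) + L * ‖u - w‖ := by
    intro u w
    have hnn : |‖u‖ - ‖w‖| ≤ ‖u - w‖ := abs_norm_sub_norm_le u w
    have h1 : Real.sqrt (1 + ‖u‖ ^ 2) ≤ Real.sqrt (1 + ‖w‖ ^ 2) + ‖u - w‖ := by
      have := aux_sqrt_lip ‖u‖ ‖w‖; linarith
    have h1' : Real.sqrt (1 + ‖w‖ ^ 2) ≤ Real.sqrt (1 + ‖u‖ ^ 2) + ‖u - w‖ := by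
      have := aux_sqrt_lip ‖w‖ ‖u‖
      rw [abs_sub_comm] at this; linarith
    have habs : |Real.sqrt (1 + ‖u‖ ^ 2) - Real.sqrt (1 + ‖w‖ ^ 2)| ≤ ‖u - w‖ :=
      abs_sub_le_iff.mpr ⟨by linarith, by linarith⟩
    have hA : (Real.sqrt (1 + ‖u‖ ^ 2) - Real.sqrt (1 + ‖w‖ ^ 2)) * t ≤ |t| * ‖u - w‖ :=
      calc (Real.sqrt (1 + ‖u‖ ^ 2) - Real.sqrt (1 + ‖w‖ ^ 2)) * t
          ≤ |(Real.sqrt (1 + ‖u‖ ^ 2) - Real.sqrt (1 + ‖w‖ ^ 2)) * t| := le_abs_self _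
        _ = |Real.sqrt (1 + ‖u‖ ^ 2) - Real.sqrt (1 + ‖w‖ ^ 2)| * |t| := abs_mul _ _
        _ ≤ ‖u - w‖ * |t| := mul_le_mul_of_nonneg_right habs (abs_nonneg t)
        _ = |t| * ‖u - w‖ := mul_comm _ _
    have h3 : (inner ℝ (u - w) x : ℝ) = (inner ℝ u x : ℝ) - (inner ℝ w x : ℝ) :=
      inner_sub_left u w x
    have h2 : -(‖x‖ * ‖u - w‖) ≤ (inner ℝ (u - w) x : ℝ) := by
      have hb1 := abs_real_inner_le_norm (u - w) x
      have hb2 := neg_abs_le (inner ℝ (u - w) x : ℝ)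
      nlinarith [hb1, hb2]
    have hexp : L * ‖u - w‖ = |t| * ‖u - w‖ + ‖x‖ * ‖u - w‖ := by rw [hL]; ring
    linarith
  -- the set where the phase decays linearly
  set S : Set (EuclideanSpace ℝ (Fin 3)) :=
    {u | Real.sqrt (1 + ‖u‖ ^ 2) * t - (inner ℝ u x : ℝ) < -ε * ‖u‖} with hS
  have hconts : Continuous fun u : EuclideanSpace ℝ (Fin 3) =>
      Real.sqrt (1 + ‖u‖ ^ 2) * t - (inner ℝ u x : ℝ) :=
    ((Real.continuous_sqrt.comp (continuous_const.add (continuous_norm.pow 2))).mul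
      continuous_const).sub (continuous_id.inner continuous_const)
  have hSopen : IsOpen S :=
    isOpen_lt hconts (continuous_const.mul continuous_norm)
  have hSmeas : MeasurableSet S := hSopen.measurableSet
  -- balls along the ray are inside S
  have hball : ∀ n : ℕ, ball (((R + 2 * n) • v : EuclideanSpace ℝ (Fin 3))) 1 ⊆ S := by
    intro n u hu
    set r : ℝ := R + 2 * n with hrdef
    have hrR : R ≤ r := by
      have hn2 : (0:ℝ) ≤ 2 * n := by positivity
      rw [hrdef]; linarith
    have hr0 : 0 ≤ r := le_trans hR0.le hrR
    have hd : ‖u - r • v‖ < 1 := by rwa [mem_ball, dist_eq_norm] at hu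
    have hd0 : 0 ≤ ‖u - r • v‖ := norm_nonneg _
    have hw : ‖(r • v : EuclideanSpace ℝ (Fin 3))‖ = r := by
      rw [norm_smul, hv1, mul_one, Real.norm_eq_abs, _root_.abs_of_nonneg hr0]
    have hsu := hlip u (r • v)
    have hsw := hray r hr0
    have hnu : ‖u‖ ≤ r + 1 := by
      have := norm_sub_norm_le u (r • v)
      rw [hw] at this; linarith
    have hLd : L * ‖u - r • v‖ ≤ L := by nlinarith
    have hεnu : ε * ‖u‖ ≤ ε * (r + 1) := mul_le_mul_of_nonneg_left hnu hε0.le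
    have hδr : δ * R ≤ δ * r := mul_le_mul_of_nonneg_left hrR hδ.le
    show Real.sqrt (1 + ‖u‖ ^ 2) * t - (inner ℝ u x : ℝ) < -ε * ‖u‖
    have hgoal : K - δ * r + L < -ε * (r + 1) := by
      nlinarith [hδr, hδR, hε.le, hε.ge]
    nlinarith
  -- volume of S is infinite
  have hStop : volume S = ⊤ := by
    have hdisj : Pairwise (Function.onFun Disjoint
        fun n : ℕ => ball (((R + 2 * n) • v : EuclideanSpace ℝ (Fin 3))) 1) := by
      intro n m hnm
      apply ball_disjoint_ball
      rw [dist_eq_norm, ← sub_smul, norm_smul, hv1, mul_one, Real.norm_eq_abs]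
      have h1 : (1 : ℝ) ≤ |(n : ℝ) - (m : ℝ)| := by
        rcases hnm.lt_or_gt with h | h
        · have : (n : ℝ) + 1 ≤ m := by exact_mod_cast Nat.succ_le_of_lt h
          rw [abs_sub_comm, _root_.abs_of_nonneg (by linarith)]; linarith
        · have : (m : ℝ) + 1 ≤ n := by exact_mod_cast Nat.succ_le_of_lt h
          rw [_root_.abs_of_nonneg (by linarith)]; linarith
      have h2 : R + 2 * (n : ℝ) - (R + 2 * m) = 2 * ((n : ℝ) - m) := by ring
      rw [h2, abs_mul, _root_.abs_of_nonneg (by norm_num : (0:ℝ) ≤ 2)]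
      linarith
    have hUsub : (⋃ n : ℕ, ball (((R + 2 * n) • v : EuclideanSpace ℝ (Fin 3))) 1) ⊆ S :=
      Set.iUnion_subset hball
    have hUvol : volume (⋃ n : ℕ, ball (((R + 2 * n) • v : EuclideanSpace ℝ (Fin 3))) 1)
        = ⊤ := by
      rw [measure_iUnion hdisj fun n => measurableSet_ball]
      have hcenter : ∀ n : ℕ,
          volume (ball (((R + 2 * n) • v : EuclideanSpace ℝ (Fin 3))) 1)
            = volume (ball (0 : EuclideanSpace ℝ (Fin 3)) 1) := fun n =>
        Measure.addHaar_ball_center volume _ 1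
      simp only [hcenter]
      exact ENNReal.tsum_const_eq_top_of_ne_zero (measure_ball_pos volume _ one_pos).ne'
    exact top_le_iff.mp (hUvol ▸ measure_mono hUsub)
  -- the witness f
  set z : ℂ := I * ((M : ℂ) - I * (Γ : ℂ) / 2) with hz
  set f : EuclideanSpace ℝ (Fin 3) → ℂ := fun u =>
    Complex.exp (z * ((Real.sqrt (1 + ‖u‖ ^ 2) * t - (inner ℝ u x : ℝ) : ℝ) : ℂ)) *
      S.indicator (fun _ => (1 : ℂ)) u with hf
  have hre : ∀ s : ℝ, (z * (s : ℂ)).re = Γ / 2 * s := by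
    intro s
    rw [hz]
    simp [Complex.mul_re, Complex.mul_im]
  have hmf : Measurable f := by
    apply Measurable.mul
    · exact Complex.measurable_exp.comp
        ((Complex.measurable_ofReal.comp hconts.measurable).const_mul z)
    · exact measurable_const.indicator hSmeas
  have hfL2 : MemLp f 2 volume := by
    refine MemLp.of_le (aux_exp_memL2 (Γ * ε / 2) (by positivity))
      hmf.aestronglyMeasurable (Filter.Eventually.of_forall fun u => ?_)
    have hrhs : ‖Real.exp (-(Γ * ε / 2 * ‖u‖))‖ = Real.exp (-(Γ * ε / 2 * ‖u‖)) := by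
      rw [Real.norm_eq_abs, _root_.abs_of_pos (Real.exp_pos _)]
    rw [hrhs]
    by_cases hu : u ∈ S
    · rw [hf]
      simp only [Set.indicator_of_mem hu, mul_one]
      rw [Complex.norm_exp, hre]
      apply Real.exp_le_exp.mpr
      have hus : Real.sqrt (1 + ‖u‖ ^ 2) * t - (inner ℝ u x : ℝ) < -ε * ‖u‖ := hu
      nlinarith
    · rw [hf]
      simp only [Set.indicator_of_notMem hu, mul_zero, norm_zero]
      exact (Real.exp_pos _).le
  refine ⟨f, hfL2, ?_⟩
  intro hcontra
  have heq : (fun u => Complex.exp (-I * (M - I * Γ / 2) *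
      ((Real.sqrt (1 + ‖u‖ ^ 2) * t - (inner ℝ u x : ℝ) : ℝ) : ℂ)) * f u)
      = S.indicator (fun _ => (1 : ℂ)) := by
    funext u
    rw [hf]
    set s : ℂ := ((Real.sqrt (1 + ‖u‖ ^ 2) * t - (inner ℝ u x : ℝ) : ℝ) : ℂ)
    rw [← mul_assoc, ← Complex.exp_add,
      show -I * ((M : ℂ) - I * (Γ : ℂ) / 2) * s + z * s = 0 by rw [hz]; ring,
      Complex.exp_zero, one_mul]
  rw [heq] at hcontra
  have hlt := hcontra.2
  rw [eLpNorm_indicator_const hSmeas (by norm_num) (by norm_num)] at hlt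
  rw [hStop] at hlt
  simp only [ENNReal.toReal_ofNat] at hlt
  rw [ENNReal.top_rpow_of_pos (by norm_num)] at hlt
  simp at hlt
end

section
/- Fix M > 0, Γ > 0 and x ∈ ℝ³. For u ∈ ℝ³ let u₀ = (1+|u|²)^{1/2}. For every complex z = t + iy with t > |x| and y < (Γ/(2M))(t - |x|), the function u ↦ e^{-i(M - iΓ/2)(u₀ z - u·x)} is bounded on ℝ³. -/
open Complex

/-- For fixed `x ∈ ℝ³` and every complex `z = t + iy` with `t > |x|` and
`y < (Γ/(2M))(t - |x|)`, the multiplier `u ↦ e^{-i(M - iΓ/2)(u₀ z - u·x)}` is bounded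
on `ℝ³` (key estimate for the analytic continuation of `a ↦ U(a)`). -/
theorem multiplier_bounded_analytic_domain (M Γ : ℝ) (hM : 0 < M) (hΓ : 0 < Γ)
    (x : EuclideanSpace ℝ (Fin 3)) (z : ℂ) (hzt : ‖x‖ < z.re)
    (hzy : z.im < Γ / (2 * M) * (z.re - ‖x‖)) :
    ∃ C : ℝ, ∀ u : EuclideanSpace ℝ (Fin 3),
      ‖Complex.exp (-I * (M - I * Γ / 2) *
        ((Real.sqrt (1 + ‖u‖ ^ 2) : ℝ) * z - ((inner ℝ u x : ℝ) : ℂ)))‖ ≤ C := by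
  refine ⟨1, fun u => ?_⟩
  set u₀ := Real.sqrt (1 + ‖u‖ ^ 2) with hu₀
  have hu1 : 1 ≤ u₀ := by
    rw [hu₀]
    nlinarith [Real.sq_sqrt (show (0:ℝ) ≤ 1 + ‖u‖ ^ 2 by positivity),
      Real.sqrt_nonneg (1 + ‖u‖ ^ 2), sq_nonneg ‖u‖]
  have hnu : ‖u‖ ≤ u₀ := by
    rw [hu₀]
    rw [Real.le_sqrt (norm_nonneg u) (by positivity)]
    nlinarith
  have hp : (inner ℝ u x : ℝ) ≤ u₀ * ‖x‖ := by
    calc (inner ℝ u x : ℝ) ≤ ‖u‖ * ‖x‖ := real_inner_le_norm u x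
    _ ≤ u₀ * ‖x‖ := mul_le_mul_of_nonneg_right hnu (norm_nonneg x)
  rw [Complex.norm_exp, Real.exp_le_one_iff]
  have hre : (-I * ((M:ℂ) - I * Γ / 2) *
      ((u₀ : ℂ) * z - ((inner ℝ u x : ℝ) : ℂ))).re
      = M * (u₀ * z.im) - Γ / 2 * (u₀ * z.re - (inner ℝ u x : ℝ)) := by
    simp [Complex.mul_re, Complex.mul_im, Complex.sub_re, Complex.sub_im]
  rw [hre]
  have hMy : M * z.im < Γ / 2 * (z.re - ‖x‖) := by
    have := mul_lt_mul_of_pos_left hzy hM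
    calc M * z.im < M * (Γ / (2 * M) * (z.re - ‖x‖)) := this
    _ = Γ / 2 * (z.re - ‖x‖) := by field_simp
  nlinarith [mul_le_mul_of_nonneg_left hMy.le (le_trans zero_le_one hu1),
    mul_le_mul_of_nonneg_left hp hΓ.le]
end
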